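/- arXiv:1511.08624 — 4 statements merged into one kernel-verified Lean document; each statement's English description precedes it below -/
import Mathlib

section
/- For every integer ℓ ≥ 1, all μ, μ̃ ∈ Δ_k, all Q, Q̃ ∈ Δ_k^k, and all f, f̃ ∈ F^k: ∫ |p_ℓ^{μ,Q,f} − p_ℓ^{μ̃,Q̃,f̃}| dλ^{⊗ℓ} ≤ Σ_{i=1}^k |μ_i − μ̃_i| + k(ℓ−1) max_{1≤i,j≤k} |Q_{i,j} − Q̃_{i,j}| + ℓ max_{1≤i≤k} ∫ |f_i − f̃_i| dλ. -/
open MeasureTheory Filter Real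

noncomputable section

/-- `μ ∈ Δ_k`: probability vector. -/
def inSimplex {k : ℕ} (μ : Fin k → ℝ) : Prop :=
  (∀ i, 0 ≤ μ i) ∧ ∑ i, μ i = 1

/-- `μ ∈ Δ_k(q)`: probability vector with all entries ≥ q. -/
def inSimplexGe {k : ℕ} (q : ℝ) (μ : Fin k → ℝ) : Prop :=
  inSimplex μ ∧ ∀ i, q ≤ μ i

/-- `Q ∈ Δ_k^k`: row-stochastic matrix. -/
def rowStochastic {k : ℕ} (Q : Fin k → Fin k → ℝ) : Prop :=
  ∀ i, inSimplex (Q i)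

/-- `Q ∈ Δ_k^k(q)`: row-stochastic matrix with all entries ≥ q. -/
def rowStochasticGe {k : ℕ} (q : ℝ) (Q : Fin k → Fin k → ℝ) : Prop :=
  ∀ i, inSimplexGe q (Q i)

/-- `f ∈ F`: probability density function with respect to `lam`. -/
def IsDensity {d : ℕ} (lam : Measure (Fin d → ℝ)) (f : (Fin d → ℝ) → ℝ) : Prop :=
  Measurable f ∧ (∀ y, 0 ≤ f y) ∧ ∫⁻ y, ENNReal.ofReal (f y) ∂lam = 1

/-- joint density `p_n^{μ,Q,f}` of the first `n` observations of the HMM with initial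
distribution `μ`, transition matrix `Q` and emission densities `f`. -/
def hmmJoint {k d : ℕ} (μ : Fin k → ℝ) (Q : Fin k → Fin k → ℝ)
    (f : Fin k → (Fin d → ℝ) → ℝ) (n : ℕ) (y : Fin n → (Fin d → ℝ)) : ℝ :=
  ∑ x : Fin n → Fin k, ∏ t : Fin n,
    (if (t : ℕ) = 0 then μ (x t)
     else Q (x ⟨(t : ℕ) - 1, lt_of_le_of_lt (Nat.sub_le _ _) t.isLt⟩) (x t)) * f (x t) (y t)

/-- prediction filter after `t` observations (paper's `w_{t+1}`, 0-indexed observations). -/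
def predFilter {k d : ℕ} (μ : Fin k → ℝ) (Q : Fin k → Fin k → ℝ)
    (f : Fin k → (Fin d → ℝ) → ℝ) (y : ℕ → (Fin d → ℝ)) : ℕ → Fin k → ℝ
  | 0 => μ
  | t + 1 => fun i =>
      (∑ j, predFilter μ Q f y t j * Q j i * f j (y t)) /
        (∑ j, predFilter μ Q f y t j * f j (y t))

/-- extension of a finite observation vector to an infinite sequence (by `0`). -/
def extSeq {d n : ℕ} (y : Fin n → (Fin d → ℝ)) : ℕ → (Fin d → ℝ) :=
  fun s => if h : s < n then y ⟨s, h⟩ else 0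

/-- `‖Q - Q'‖ = max_{i,j} |Q_{i,j} - Q'_{i,j}|`. -/
def matDist {k : ℕ} (Q Q' : Fin k → Fin k → ℝ) : ℝ :=
  ⨆ i, ⨆ j, |Q i j - Q' i j|

/-- `ρ = (1 - kq)/(1 - (k-1)q)`. -/
def mixRho (k : ℕ) (q : ℝ) : ℝ := (1 - (k : ℝ) * q) / (1 - ((k : ℝ) - 1) * q)

open scoped ENNReal

/-!
Expanding the first hidden state gives
`p_{n+1}^{μ,Q,f}(y₀, y') = ∑ i, μ i * f i y₀ * p_n^{Q i,Q,f}(y')`.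
The difference of two such mixtures of tensor products splits as
`∑ (μ i - μ̃ i) f i ⊗ p i + ∑ μ̃ i (f i - f̃ i) ⊗ p i + ∑ μ̃ i f̃ i ⊗ (p i - p̃ i)`,
and since every `f i`, `f̃ i`, `p i` has `L¹` mass at most one, the `L¹` distance at length
`n + 1` is at most `∑ |μ i - μ̃ i| + maxᵢ ‖f i - f̃ i‖₁` plus the `μ̃`-average of the distances at
length `n` started from the rows `Q i`, `Q̃ i`. Induction on `n` closes the argument: each
further step contributes `∑ⱼ |Q i j - Q̃ i j| ≤ k ‖Q - Q̃‖` and one more emission term.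
-/

theorem inSimplex.sum_ofReal_eq_one {k : ℕ} {μ : Fin k → ℝ} (hμ : inSimplex μ) :
    ∑ i, ENNReal.ofReal (μ i) = 1 := by
  rw [← ENNReal.ofReal_sum_of_nonneg fun i _ => hμ.1 i, hμ.2, ENNReal.ofReal_one]

theorem abs_sub_le_matDist {k : ℕ} (Q Qt : Fin k → Fin k → ℝ) (i j : Fin k) :
    |Q i j - Qt i j| ≤ matDist Q Qt :=
  (le_ciSup (Set.finite_range _).bddAbove j).trans
    (le_ciSup (f := fun i => ⨆ j, |Q i j - Qt i j|) (Set.finite_range _).bddAbove i)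

theorem matDist_nonneg {k : ℕ} (Q Qt : Fin k → Fin k → ℝ) : 0 ≤ matDist Q Qt :=
  Real.iSup_nonneg fun _ => Real.iSup_nonneg fun _ => abs_nonneg _

section Densities

variable {d : ℕ} {lam : Measure (Fin d → ℝ)} {f g : (Fin d → ℝ) → ℝ}

theorem IsDensity.lintegral_ofReal_abs (hf : IsDensity lam f) :
    ∫⁻ y, ENNReal.ofReal |f y| ∂lam = 1 := by
  simpa only [abs_of_nonneg (hf.2.1 _)] using hf.2.2

theorem IsDensity.integrable (hf : IsDensity lam f) : Integrable f lam :=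
  ⟨hf.1.aestronglyMeasurable, (hasFiniteIntegral_iff_ofReal (ae_of_all _ hf.2.1)).2
    (hf.2.2 ▸ ENNReal.one_lt_top)⟩

theorem IsDensity.lintegral_ofReal_abs_sub (hf : IsDensity lam f) (hg : IsDensity lam g) :
    ∫⁻ y, ENNReal.ofReal |f y - g y| ∂lam = ENNReal.ofReal (∫ y, |f y - g y| ∂lam) :=
  (ofReal_integral_eq_lintegral_ofReal (hf.integrable.sub hg.integrable).abs
    (ae_of_all _ fun _ => abs_nonneg _)).symm

end Densities

section Tensor

variable {α β : Type*} [MeasurableSpace α] [MeasurableSpace β]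

theorem lintegral_pi_eq_lintegral_prod_cons (ν : Measure α) [SigmaFinite ν] (n : ℕ)
    (F : (Fin (n + 1) → α) → ℝ≥0∞) :
    ∫⁻ y, F y ∂(Measure.pi fun _ => ν)
      = ∫⁻ p, F (Fin.cons p.1 p.2) ∂(ν.prod (Measure.pi fun _ : Fin n => ν)) := by
  have he := (measurePreserving_piFinSuccAbove (fun _ : Fin (n + 1) => ν) 0).symm
  rw [← he.lintegral_comp_emb (MeasurableEquiv.measurableEmbedding _)]
  simp only [MeasurableEquiv.piFinSuccAbove_symm_apply, Fin.insertNthEquiv_zero]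
  rfl

theorem lintegral_ofReal_abs_sum_mul_le {ι : Type*} [Fintype ι]
    (ν : Measure α) (ν' : Measure β) [SFinite ν'] (c : ι → ℝ) {g : ι → α → ℝ} {h : ι → β → ℝ}
    (hg : ∀ i, Measurable (g i)) (hh : ∀ i, Measurable (h i)) :
    ∫⁻ p, ENNReal.ofReal |∑ i, c i * g i p.1 * h i p.2| ∂(ν.prod ν')
      ≤ ∑ i, ENNReal.ofReal |c i| * (∫⁻ a, ENNReal.ofReal |g i a| ∂ν)
          * ∫⁻ b, ENNReal.ofReal |h i b| ∂ν' := by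
  have hpt : ∀ p : α × β, ENNReal.ofReal |∑ i, c i * g i p.1 * h i p.2|
      ≤ ∑ i, ENNReal.ofReal |c i| * (ENNReal.ofReal |g i p.1| * ENNReal.ofReal |h i p.2|) := by
    intro p
    refine (ENNReal.ofReal_le_ofReal (Finset.abs_sum_le_sum_abs _ _)).trans ?_
    rw [ENNReal.ofReal_sum_of_nonneg fun i _ => abs_nonneg _]
    gcongr with i
    rw [abs_mul, abs_mul, ENNReal.ofReal_mul (by positivity), ENNReal.ofReal_mul (by positivity),
      mul_assoc]
  refine (lintegral_mono hpt).trans_eq ?_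
  rw [lintegral_finsetSum _ fun i _ => ?_]
  · refine Finset.sum_congr rfl fun i _ => ?_
    rw [lintegral_const_mul _ (by fun_prop),
      lintegral_prod_mul (hg i).abs.ennreal_ofReal.aemeasurable
        (hh i).abs.ennreal_ofReal.aemeasurable, mul_assoc]
  · fun_prop

theorem lintegral_ofReal_abs_sum_mul_sub_sum_mul_le {k : ℕ} {ν : Measure α} {ν' : Measure β}
    [SFinite ν'] {μ μt : Fin k → ℝ} {f ft : Fin k → α → ℝ} {p pt : Fin k → β → ℝ}
    (hμt : inSimplex μt) (hf : ∀ i, Measurable (f i)) (hft : ∀ i, Measurable (ft i))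
    (hp : ∀ i, Measurable (p i)) (hpt : ∀ i, Measurable (pt i))
    (hf_le : ∀ i, ∫⁻ a, ENNReal.ofReal |f i a| ∂ν ≤ 1)
    (hft_le : ∀ i, ∫⁻ a, ENNReal.ofReal |ft i a| ∂ν ≤ 1)
    (hp_le : ∀ i, ∫⁻ b, ENNReal.ofReal |p i b| ∂ν' ≤ 1) {S : ℝ≥0∞}
    (hS : ∀ i, ∫⁻ a, ENNReal.ofReal |f i a - ft i a| ∂ν ≤ S) :
    ∫⁻ x, ENNReal.ofReal |∑ i, μ i * f i x.1 * p i x.2 - ∑ i, μt i * ft i x.1 * pt i x.2|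
        ∂(ν.prod ν')
      ≤ ∑ i, ENNReal.ofReal |μ i - μt i| + S
          + ∑ i, ENNReal.ofReal (μt i) * ∫⁻ b, ENNReal.ofReal |p i b - pt i b| ∂ν' := by
  have hsplit : ∀ x : α × β,
      ∑ i, μ i * f i x.1 * p i x.2 - ∑ i, μt i * ft i x.1 * pt i x.2
        = ∑ i, (μ i - μt i) * f i x.1 * p i x.2
          + ∑ i, μt i * (f i - ft i) x.1 * p i x.2
          + ∑ i, μt i * ft i x.1 * (p i - pt i) x.2 := by
    intro x
    simp only [Pi.sub_apply]
    rw [← Finset.sum_sub_distrib, ← Finset.sum_add_distrib, ← Finset.sum_add_distrib]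
    exact Finset.sum_congr rfl fun i _ => by ring
  have htri : ∀ x : α × β,
      ENNReal.ofReal |∑ i, μ i * f i x.1 * p i x.2 - ∑ i, μt i * ft i x.1 * pt i x.2|
        ≤ ENNReal.ofReal |∑ i, (μ i - μt i) * f i x.1 * p i x.2|
          + ENNReal.ofReal |∑ i, μt i * (f i - ft i) x.1 * p i x.2|
          + ENNReal.ofReal |∑ i, μt i * ft i x.1 * (p i - pt i) x.2| := by
    intro x
    rw [hsplit, ← ENNReal.ofReal_add (abs_nonneg _) (abs_nonneg _),
      ← ENNReal.ofReal_add (by positivity) (abs_nonneg _)]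
    exact ENNReal.ofReal_le_ofReal (abs_add_three _ _ _)
  refine (lintegral_mono htri).trans ?_
  rw [lintegral_add_left (by fun_prop), lintegral_add_left (by fun_prop)]
  gcongr ?_ + ?_ + ?_
  · refine (lintegral_ofReal_abs_sum_mul_le ν ν' _ hf hp).trans (Finset.sum_le_sum fun i _ => ?_)
    calc _ ≤ ENNReal.ofReal |μ i - μt i| * 1 * 1 := by gcongr; exacts [hf_le i, hp_le i]
      _ = _ := by rw [mul_one, mul_one]
  · refine (lintegral_ofReal_abs_sum_mul_le ν ν' _ (fun i => (hf i).sub (hft i)) hp).trans ?_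
    calc _ ≤ ∑ i, ENNReal.ofReal (μt i) * S * 1 := by
          gcongr with i
          · rw [abs_of_nonneg (hμt.1 i)]
          · exact hS i
          · exact hp_le i
      _ = S := by rw [← Finset.sum_mul, ← Finset.sum_mul, hμt.sum_ofReal_eq_one, one_mul, mul_one]
  · refine (lintegral_ofReal_abs_sum_mul_le ν ν' _ hft fun i => (hp i).sub (hpt i)).trans
      (Finset.sum_le_sum fun i _ => ?_)
    calc _ ≤ ENNReal.ofReal (μt i) * 1 * ∫⁻ b, ENNReal.ofReal |p i b - pt i b| ∂ν' := by
          rw [abs_of_nonneg (hμt.1 i)]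
          gcongr _ * ?_ * _
          exact hft_le i
      _ = _ := by rw [mul_one]

end Tensor

section HiddenMarkovModel

variable {k d : ℕ} {lam : Measure (Fin d → ℝ)} [SigmaFinite lam]

theorem hmmJoint_zero (μ : Fin k → ℝ) (Q : Fin k → Fin k → ℝ) (f : Fin k → (Fin d → ℝ) → ℝ)
    (y : Fin 0 → Fin d → ℝ) : hmmJoint μ Q f 0 y = 1 := by
  simp [hmmJoint]

theorem hmmJoint_cons (μ : Fin k → ℝ) (Q : Fin k → Fin k → ℝ) (f : Fin k → (Fin d → ℝ) → ℝ)
    (n : ℕ) (a : Fin d → ℝ) (z : Fin n → Fin d → ℝ) :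
    hmmJoint μ Q f (n + 1) (Fin.cons a z) = ∑ i, μ i * f i a * hmmJoint (Q i) Q f n z := by
  unfold hmmJoint
  rw [← (Fin.consEquiv fun _ => Fin k).sum_comp, Fintype.sum_prod_type]
  refine Finset.sum_congr rfl fun i _ => ?_
  rw [Finset.mul_sum]
  refine Finset.sum_congr rfl fun x _ => ?_
  rw [Fin.prod_univ_succ]
  congr 1
  refine Finset.prod_congr rfl fun t _ => ?_
  obtain ⟨_ | t, ht⟩ := t <;> rfl

theorem measurable_hmmJoint (μ : Fin k → ℝ) (Q : Fin k → Fin k → ℝ)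
    {f : Fin k → (Fin d → ℝ) → ℝ} (hf : ∀ i, Measurable (f i)) (n : ℕ) :
    Measurable (hmmJoint μ Q f n) := by
  unfold hmmJoint
  fun_prop

theorem lintegral_ofReal_abs_hmmJoint_le_one {μ : Fin k → ℝ} {Q : Fin k → Fin k → ℝ}
    {f : Fin k → (Fin d → ℝ) → ℝ} (hμ : inSimplex μ) (hQ : rowStochastic Q)
    (hf : ∀ i, IsDensity lam (f i)) (n : ℕ) :
    ∫⁻ y, ENNReal.ofReal |hmmJoint μ Q f n y| ∂(Measure.pi fun _ => lam) ≤ 1 := by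
  induction n generalizing μ with
  | zero => simp [hmmJoint_zero]
  | succ n ih =>
    rw [lintegral_pi_eq_lintegral_prod_cons]
    simp only [hmmJoint_cons]
    refine (lintegral_ofReal_abs_sum_mul_le _ _ μ (h := fun i => hmmJoint (Q i) Q f n)
      (fun i => (hf i).1) fun i => measurable_hmmJoint _ _ (fun j => (hf j).1) n).trans ?_
    calc ∑ i, ENNReal.ofReal |μ i| * (∫⁻ a, ENNReal.ofReal |f i a| ∂lam)
          * ∫⁻ z, ENNReal.ofReal |hmmJoint (Q i) Q f n z| ∂(Measure.pi fun _ => lam)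
        ≤ ∑ i, ENNReal.ofReal (μ i) := by
          gcongr with i
          rw [(hf i).lintegral_ofReal_abs, abs_of_nonneg (hμ.1 i), mul_one]
          exact mul_le_of_le_one_right' (ih (hQ i))
      _ = 1 := hμ.sum_ofReal_eq_one

theorem lintegral_ofReal_abs_hmmJoint_succ_sub_le {μ μt : Fin k → ℝ} {Q Qt : Fin k → Fin k → ℝ}
    {f ft : Fin k → (Fin d → ℝ) → ℝ} (hμt : inSimplex μt) (hQ : rowStochastic Q)
    (hf : ∀ i, IsDensity lam (f i)) (hft : ∀ i, IsDensity lam (ft i)) {S : ℝ≥0∞}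
    (hS : ∀ i, ∫⁻ y, ENNReal.ofReal |f i y - ft i y| ∂lam ≤ S) (n : ℕ) :
    ∫⁻ y, ENNReal.ofReal |hmmJoint μ Q f (n + 1) y - hmmJoint μt Qt ft (n + 1) y|
        ∂(Measure.pi fun _ => lam)
      ≤ ∑ i, ENNReal.ofReal |μ i - μt i| + S + ∑ i, ENNReal.ofReal (μt i) *
          ∫⁻ z, ENNReal.ofReal |hmmJoint (Q i) Q f n z - hmmJoint (Qt i) Qt ft n z|
            ∂(Measure.pi fun _ => lam) := by
  rw [lintegral_pi_eq_lintegral_prod_cons]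
  simp only [hmmJoint_cons]
  exact lintegral_ofReal_abs_sum_mul_sub_sum_mul_le (p := fun i => hmmJoint (Q i) Q f n)
    (pt := fun i => hmmJoint (Qt i) Qt ft n) hμt (fun i => (hf i).1) (fun i => (hft i).1)
    (fun i => measurable_hmmJoint _ _ (fun j => (hf j).1) n)
    (fun i => measurable_hmmJoint _ _ (fun j => (hft j).1) n)
    (fun i => (hf i).lintegral_ofReal_abs.le) (fun i => (hft i).lintegral_ofReal_abs.le)
    (fun i => lintegral_ofReal_abs_hmmJoint_le_one (hQ i) hQ hf n) hS

theorem lintegral_ofReal_abs_hmmJoint_sub_le {μ μt : Fin k → ℝ} {Q Qt : Fin k → Fin k → ℝ}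
    {f ft : Fin k → (Fin d → ℝ) → ℝ} (hμt : inSimplex μt) (hQ : rowStochastic Q)
    (hQt : rowStochastic Qt) (hf : ∀ i, IsDensity lam (f i)) (hft : ∀ i, IsDensity lam (ft i))
    {D S : ℝ≥0∞} (hD : ∀ i j, ENNReal.ofReal |Q i j - Qt i j| ≤ D)
    (hS : ∀ i, ∫⁻ y, ENNReal.ofReal |f i y - ft i y| ∂lam ≤ S) (n : ℕ) :
    ∫⁻ y, ENNReal.ofReal |hmmJoint μ Q f (n + 1) y - hmmJoint μt Qt ft (n + 1) y|
        ∂(Measure.pi fun _ => lam)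
      ≤ ∑ i, ENNReal.ofReal |μ i - μt i| + k * n * D + (n + 1) * S := by
  induction n generalizing μ μt with
  | zero =>
    refine (lintegral_ofReal_abs_hmmJoint_succ_sub_le hμt hQ hf hft hS 0).trans_eq ?_
    simp [hmmJoint_zero]
  | succ n ih =>
    have hrow : ∀ i, ∑ j, ENNReal.ofReal |Q i j - Qt i j| ≤ k * D := fun i =>
      (Finset.sum_le_card_nsmul _ _ _ fun j _ => hD i j).trans_eq (by simp)
    calc _ ≤ ∑ i, ENNReal.ofReal |μ i - μt i| + S
            + ∑ i, ENNReal.ofReal (μt i) * (k * D + k * n * D + (n + 1) * S) := by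
          refine (lintegral_ofReal_abs_hmmJoint_succ_sub_le hμt hQ hf hft hS (n + 1)).trans ?_
          gcongr with i
          exact (ih (hQt i)).trans (by gcongr; exact hrow i)
      _ = ∑ i, ENNReal.ofReal |μ i - μt i| + ↑k * ↑(n + 1) * D + (↑(n + 1) + 1) * S := by
          rw [← Finset.sum_mul, hμt.sum_ofReal_eq_one, one_mul]
          push_cast
          ring

end HiddenMarkovModel

theorem statement7_general (k d : ℕ)
    (lam : Measure (Fin d → ℝ)) [SigmaFinite lam]
    (l : ℕ)
    (μ μt : Fin k → ℝ) (hμt : inSimplex μt)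
    (Q Qt : Fin k → Fin k → ℝ) (hQ : rowStochastic Q) (hQt : rowStochastic Qt)
    (f ft : Fin k → (Fin d → ℝ) → ℝ)
    (hf : ∀ i, IsDensity lam (f i)) (hft : ∀ i, IsDensity lam (ft i)) :
    ∫⁻ y : Fin l → (Fin d → ℝ),
        ENNReal.ofReal |hmmJoint μ Q f l y - hmmJoint μt Qt ft l y|
        ∂(Measure.pi fun _ => lam)
      ≤ ENNReal.ofReal ((∑ i, |μ i - μt i|) + (k : ℝ) * ((l : ℝ) - 1) * matDist Q Qt
          + (l : ℝ) * ⨆ i, ∫ y, |f i y - ft i y| ∂lam) := by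
  cases l with
  | zero => simp [hmmJoint_zero]
  | succ n =>
    set S := ⨆ i, ∫ y, |f i y - ft i y| ∂lam
    have hS : ∀ i, ∫⁻ y, ENNReal.ofReal |f i y - ft i y| ∂lam ≤ ENNReal.ofReal S := fun i => by
      rw [(hf i).lintegral_ofReal_abs_sub (hft i)]
      exact ENNReal.ofReal_le_ofReal
        (le_ciSup (f := fun i => ∫ y, |f i y - ft i y| ∂lam) (Set.finite_range _).bddAbove i)
    have hS0 : 0 ≤ S := Real.iSup_nonneg fun _ => integral_nonneg fun _ => abs_nonneg _
    refine (lintegral_ofReal_abs_hmmJoint_sub_le hμt hQ hQt hf hft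
      (fun i j => ENNReal.ofReal_le_ofReal (abs_sub_le_matDist Q Qt i j)) hS n).trans_eq ?_
    have hsum : 0 ≤ ∑ i, |μ i - μt i| := Finset.sum_nonneg fun _ _ => abs_nonneg _
    have hM := mul_nonneg (by positivity : (0 : ℝ) ≤ k * n) (matDist_nonneg Q Qt)
    rw [Nat.cast_succ, add_sub_cancel_right, ENNReal.ofReal_add (add_nonneg hsum hM)
      (mul_nonneg (by positivity) hS0), ENNReal.ofReal_add hsum hM,
      ENNReal.ofReal_sum_of_nonneg fun _ _ => abs_nonneg _, ENNReal.ofReal_mul (by positivity),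
      ENNReal.ofReal_mul (by positivity), ENNReal.ofReal_mul (by positivity),
      ENNReal.ofReal_add (by positivity) zero_le_one]
    simp

/-- `L¹` bound between joint HMM densities in terms of the parameters. -/
theorem statement7 (k d : ℕ) (hk : 2 ≤ k)
    (lam : Measure (Fin d → ℝ)) [SigmaFinite lam]
    (l : ℕ) (hl : 1 ≤ l)
    (μ μt : Fin k → ℝ) (hμ : inSimplex μ) (hμt : inSimplex μt)
    (Q Qt : Fin k → Fin k → ℝ) (hQ : rowStochastic Q) (hQt : rowStochastic Qt)
    (f ft : Fin k → (Fin d → ℝ) → ℝ)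
    (hf : ∀ i, IsDensity lam (f i)) (hft : ∀ i, IsDensity lam (ft i)) :
    ∫⁻ y : Fin l → (Fin d → ℝ),
        ENNReal.ofReal |hmmJoint μ Q f l y - hmmJoint μt Qt ft l y|
        ∂(Measure.pi fun _ => lam)
      ≤ ENNReal.ofReal ((∑ i, |μ i - μt i|) + (k : ℝ) * ((l : ℝ) - 1) * matDist Q Qt
          + (l : ℝ) * ⨆ i, ∫ y, |f i y - ft i y| ∂lam) :=
  statement7_general k d lam l μ μt hμt Q Qt hQ hQt f ft hf hft
end
end

section
/- For every integer k ≥ 1 and all v, w : {1,…,k} → [0,∞) with V := Σ_u v_u > 0 and W := Σ_u w_u > 0: Σ_{u=1}^k | v_u/V − w_u/W | ≤ 2 min( (Σ_{u=1}^k |v_u − w_u|)/W, 1 ). -/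
open MeasureTheory Filter Real

noncomputable section

/-!
Write `v/V - w/W = (v - w)/W + v (1/V - 1/W)`. Summing absolute values, the first part gives
`Σ |v - w| / W` and the second `V |1/V - 1/W| = |W - V| / W`, which is again at most
`Σ |v - w| / W`. The bound `2` is the triangle inequality for two probability vectors.
-/

section Normalization

variable {ι : Type*} [Fintype ι] {v w : ι → ℝ}

theorem abs_sum_sub_sum_le_sum_abs_sub (v w : ι → ℝ) :
    |∑ u, v u - ∑ u, w u| ≤ ∑ u, |v u - w u| := by
  rw [← Finset.sum_sub_distrib]
  exact Finset.abs_sum_le_sum_abs _ _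

theorem sum_div_sum_le_one (v : ι → ℝ) : ∑ u, v u / ∑ u', v u' ≤ 1 := by
  rw [← Finset.sum_div]
  exact div_self_le_one _

theorem sum_abs_div_sum_sub_div_sum_le_two (hv : ∀ u, 0 ≤ v u) (hw : ∀ u, 0 ≤ w u) :
    ∑ u, |v u / ∑ u', v u' - w u / ∑ u', w u'| ≤ 2 := by
  have hV : 0 ≤ ∑ u', v u' := Finset.sum_nonneg fun u _ => hv u
  have hW : 0 ≤ ∑ u', w u' := Finset.sum_nonneg fun u _ => hw u
  calc ∑ u, |v u / ∑ u', v u' - w u / ∑ u', w u'|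
      ≤ ∑ u, (v u / ∑ u', v u' + w u / ∑ u', w u') := by
        gcongr with u
        grw [abs_sub, abs_of_nonneg (div_nonneg (hv u) hV), abs_of_nonneg (div_nonneg (hw u) hW)]
    _ ≤ 1 + 1 := by
        rw [Finset.sum_add_distrib]
        exact add_le_add (sum_div_sum_le_one v) (sum_div_sum_le_one w)
    _ = 2 := by norm_num

theorem sum_abs_div_sum_sub_div_sum_le (hv : ∀ u, 0 ≤ v u)
    (hV : 0 < ∑ u, v u) (hW : 0 < ∑ u, w u) :
    ∑ u, |v u / ∑ u', v u' - w u / ∑ u', w u'| ≤ 2 * (∑ u, |v u - w u|) / ∑ u', w u' := by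
  set V := ∑ u', v u'
  set W := ∑ u', w u'
  have term_le (u : ι) : |v u / V - w u / W| ≤ |v u - w u| / W + v u * |1 / V - 1 / W| := by
    calc |v u / V - w u / W| = |(v u - w u) / W + v u * (1 / V - 1 / W)| := by
          congr 1; field_simp; ring
      _ ≤ |v u - w u| / W + v u * |1 / V - 1 / W| := by
          grw [abs_add_le, abs_div, abs_of_pos hW, abs_mul, abs_of_nonneg (hv u)]
  have mass_term : V * |1 / V - 1 / W| = |W - V| / W :=
    calc V * |1 / V - 1 / W| = |V * (1 / V - 1 / W)| := by rw [abs_mul, abs_of_pos hV]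
      _ = |(W - V) / W| := by congr 1; field_simp
      _ = |W - V| / W := by rw [abs_div, abs_of_pos hW]
  calc ∑ u, |v u / V - w u / W|
      ≤ ∑ u, (|v u - w u| / W + v u * |1 / V - 1 / W|) := Finset.sum_le_sum fun u _ => term_le u
    _ = (∑ u, |v u - w u|) / W + |W - V| / W := by
        rw [Finset.sum_add_distrib, ← Finset.sum_div, ← Finset.sum_mul, mass_term]
    _ ≤ 2 * (∑ u, |v u - w u|) / W := by
        rw [mul_div_assoc, two_mul]
        gcongr
        rw [abs_sub_comm]
        exact abs_sum_sub_sum_le_sum_abs_sub v w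

end Normalization

theorem statement11_general (k : ℕ) (v w : Fin k → ℝ)
    (hv : ∀ u, 0 ≤ v u) (hw : ∀ u, 0 ≤ w u)
    (hV : 0 < ∑ u, v u) (hW : 0 < ∑ u, w u) :
    ∑ u, |v u / (∑ u', v u') - w u / (∑ u', w u')|
      ≤ 2 * min ((∑ u, |v u - w u|) / (∑ u', w u')) 1 := by
  rw [mul_min_of_nonneg _ _ zero_le_two, ← mul_div_assoc, mul_one]
  exact le_min (sum_abs_div_sum_sub_div_sum_le hv hV hW)
    (sum_abs_div_sum_sub_div_sum_le_two hv hw)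

/-- `Σ_u |v_u/V − w_u/W| ≤ 2 min((Σ_u |v_u − w_u|)/W, 1)`. -/
theorem statement11 (k : ℕ) (hk : 1 ≤ k) (v w : Fin k → ℝ)
    (hv : ∀ u, 0 ≤ v u) (hw : ∀ u, 0 ≤ w u)
    (hV : 0 < ∑ u, v u) (hW : 0 < ∑ u, w u) :
    ∑ u, |v u / (∑ u', v u') - w u / (∑ u', w u')|
      ≤ 2 * min ((∑ u, |v u - w u|) / (∑ u', w u')) 1 :=
  statement11_general k v w hv hw hV hW
end
end

section
/- Let (Ω, F, P) be a probability space with a filtration (F_t)_{t≥0}, and for t = 1,…,n let Z_t be an F_t-measurable, square-integrable real random variable. Then E[ ( Σ_{t=1}^n (E[Z_t | F_{t−1}] − E[Z_t]) )² ] ≤ Σ_{t=1}^n E[Z_t²] + 2 Σ_{1≤r<t≤n} (E[Z_r²])^{1/2} · ( E[ (E[Z_t | F_{r−1}] − E[Z_t])² ] )^{1/2}. -/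
/-!
Write `Y t = E[Z_t | F_{t-1}] - E[Z_t]` and expand the square of `∑ Y t` into the diagonal terms
`E[Y_t²]` and the cross terms `2 E[Y_r Y_t]`, `r < t`. Conditional expectation is an L²
contraction, so `E[Y_t²] = Var(E[Z_t | F_{t-1}]) ≤ E[Z_t²]`. Since `Y_r` is `F_{r-1}`-measurable
and `F_{r-1} ≤ F_{t-1}`, conditioning can be moved from `F_{t-1}` to `F_{r-1}` inside
`E[Y_r Y_t]`, and Cauchy–Schwarz bounds the result by
`E[Y_r²]^{1/2} E[(E[Z_t | F_{r-1}] - E[Z_t])²]^{1/2}`.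
-/

open MeasureTheory ProbabilityTheory Real

theorem sq_sum_Icc_eq_add_two_mul_sum_Ico {R : Type*} [CommSemiring R] (f : ℕ → R) (n : ℕ) :
    (∑ t ∈ Finset.Icc 1 n, f t) ^ 2
      = ∑ t ∈ Finset.Icc 1 n, f t ^ 2
        + 2 * ∑ t ∈ Finset.Icc 1 n, ∑ r ∈ Finset.Ico 1 t, f r * f t := by
  induction n with
  | zero => simp
  | succ n ih =>
    have h : 1 ≤ n + 1 := Nat.le_add_left 1 n
    simp only [← Finset.Ico_add_one_right_eq_Icc] at ih ⊢
    rw [Finset.sum_Ico_succ_top h, Finset.sum_Ico_succ_top h, Finset.sum_Ico_succ_top h, add_sq,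
      ih, ← Finset.sum_mul]
    ring

namespace MeasureTheory

variable {Ω : Type*} {m m' m0 : MeasurableSpace Ω} {μ : Measure Ω}

theorem integral_sq_sum_Icc_eq {Y : ℕ → Ω → ℝ} {n : ℕ}
    (hY : ∀ t ∈ Finset.Icc 1 n, MemLp (Y t) 2 μ) :
    ∫ ω, (∑ t ∈ Finset.Icc 1 n, Y t ω) ^ 2 ∂μ
      = ∑ t ∈ Finset.Icc 1 n, ∫ ω, Y t ω ^ 2 ∂μ
        + 2 * ∑ t ∈ Finset.Icc 1 n, ∑ r ∈ Finset.Ico 1 t, ∫ ω, Y r ω * Y t ω ∂μ := by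
  have hIco : ∀ t ∈ Finset.Icc 1 n, ∀ r ∈ Finset.Ico 1 t, r ∈ Finset.Icc 1 n := by
    intro t ht r hr
    simp only [Finset.mem_Icc, Finset.mem_Ico] at ht hr ⊢
    omega
  have hdiag : ∀ t ∈ Finset.Icc 1 n, Integrable (fun ω => Y t ω ^ 2) μ := fun t ht =>
    (hY t ht).integrable_sq
  have hcross : ∀ t ∈ Finset.Icc 1 n, ∀ r ∈ Finset.Ico 1 t,
      Integrable (fun ω => Y r ω * Y t ω) μ := fun t ht r hr =>
    (hY r (hIco t ht r hr)).integrable_mul (hY t ht)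
  simp_rw [sq_sum_Icc_eq_add_two_mul_sum_Ico]
  rw [integral_add (integrable_finsetSum _ hdiag)
      ((integrable_finsetSum _ fun t ht => integrable_finsetSum _ (hcross t ht)).const_mul 2),
    integral_const_mul, integral_finsetSum _ hdiag,
    integral_finsetSum _ fun t ht => integrable_finsetSum _ (hcross t ht)]
  congr 2
  exact Finset.sum_congr rfl fun t ht => integral_finsetSum _ (hcross t ht)

theorem lpNorm_two_eq_sqrt_integral_sq {f : Ω → ℝ} (hf : AEStronglyMeasurable f μ) :
    lpNorm f 2 μ = √(∫ ω, f ω ^ 2 ∂μ) := by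
  rw [lpNorm_eq_integral_norm_rpow_toReal two_ne_zero ENNReal.ofNat_ne_top hf, sqrt_eq_rpow]
  simp [one_div]

theorem integral_mul_le_sqrt_mul_sqrt {f g : Ω → ℝ} (hf : MemLp f 2 μ) (hg : MemLp g 2 μ) :
    ∫ ω, f ω * g ω ∂μ ≤ √(∫ ω, f ω ^ 2 ∂μ) * √(∫ ω, g ω ^ 2 ∂μ) := by
  have := integral_mul_norm_le_Lp_mul_Lq (μ := μ) Real.HolderConjugate.two_two
    (by simpa using hf) (by simpa using hg)
  calc ∫ ω, f ω * g ω ∂μ ≤ ∫ ω, ‖f ω‖ * ‖g ω‖ ∂μ :=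
        integral_mono (hf.integrable_mul hg) (hf.norm.integrable_mul hg.norm)
          fun ω => by simpa [abs_mul] using le_abs_self (f ω * g ω)
    _ ≤ _ := by simpa [sqrt_eq_rpow, one_div] using this

theorem integral_sq_condExp_le {g : Ω → ℝ} (hg : MemLp g 2 μ) :
    ∫ ω, (μ[g|m]) ω ^ 2 ∂μ ≤ ∫ ω, g ω ^ 2 ∂μ := by
  have h := hg.lpNorm_condExp_le_lpNorm (m := m) one_le_two
  rwa [lpNorm_two_eq_sqrt_integral_sq integrable_condExp.1, lpNorm_two_eq_sqrt_integral_sq hg.1,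
    sqrt_le_sqrt_iff (integral_nonneg fun _ => sq_nonneg _)] at h

theorem integral_sq_condExp_sub_integral_le [IsProbabilityMeasure μ] (hm : m ≤ m0) {g : Ω → ℝ}
    (hg : MemLp g 2 μ) :
    ∫ ω, ((μ[g|m]) ω - ∫ ω', g ω' ∂μ) ^ 2 ∂μ ≤ ∫ ω, g ω ^ 2 ∂μ := calc
  _ = variance (μ[g|m]) μ := by
        rw [variance_eq_integral integrable_condExp.aemeasurable, integral_condExp hm]
  _ ≤ ∫ ω, (μ[g|m]) ω ^ 2 ∂μ := variance_le_expectation_sq integrable_condExp.1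
  _ ≤ ∫ ω, g ω ^ 2 ∂μ := integral_sq_condExp_le hg

theorem integral_mul_condExp_of_stronglyMeasurable [IsFiniteMeasure μ] (hm : m ≤ m0)
    {f g : Ω → ℝ} (hfm : StronglyMeasurable[m] f) (hf : MemLp f 2 μ) (hg : MemLp g 2 μ) :
    ∫ ω, f ω * (μ[g|m]) ω ∂μ = ∫ ω, f ω * g ω ∂μ := calc
  _ = ∫ ω, (μ[f * g|m]) ω ∂μ := integral_congr_ae
        (condExp_mul_of_stronglyMeasurable_left hfm (hf.integrable_mul hg)
          (hg.integrable one_le_two)).symm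
  _ = _ := integral_condExp hm

theorem condExp_sub_const [IsFiniteMeasure μ] (hm : m ≤ m0) {g : Ω → ℝ} (hg : Integrable g μ)
    (c : ℝ) : (fun ω => (μ[g|m]) ω - c) =ᵐ[μ] μ[fun ω => g ω - c|m] := by
  filter_upwards [condExp_sub hg (integrable_const c) m] with ω hω
  rw [Pi.sub_apply, condExp_const hm] at hω
  exact hω.symm

theorem integral_mul_condExp_sub_const [IsFiniteMeasure μ] (hm : m ≤ m0) {f g : Ω → ℝ}
    (hfm : StronglyMeasurable[m] f) (hf : MemLp f 2 μ) (hg : MemLp g 2 μ) (c : ℝ) :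
    ∫ ω, f ω * ((μ[g|m]) ω - c) ∂μ = ∫ ω, f ω * (g ω - c) ∂μ := calc
  _ = ∫ ω, f ω * (μ[fun ω => g ω - c|m]) ω ∂μ := integral_congr_ae
        ((condExp_sub_const hm (hg.integrable one_le_two) c).mono fun ω hω => congrArg (f ω * ·) hω)
  _ = _ := integral_mul_condExp_of_stronglyMeasurable hm hfm hf (hg.sub (memLp_const c))

theorem integral_mul_condExp_sub_const_le [IsFiniteMeasure μ] (hmm' : m ≤ m') (hm' : m' ≤ m0)
    {f g : Ω → ℝ} (hfm : StronglyMeasurable[m] f) (hf : MemLp f 2 μ) (hg : MemLp g 2 μ) (c : ℝ) :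
    ∫ ω, f ω * ((μ[g|m']) ω - c) ∂μ ≤ √(∫ ω, f ω ^ 2 ∂μ) * √(∫ ω, ((μ[g|m]) ω - c) ^ 2 ∂μ) := by
  rw [integral_mul_condExp_sub_const hm' (hfm.mono hmm') hf hg,
    ← integral_mul_condExp_sub_const (hmm'.trans hm') hfm hf hg]
  exact integral_mul_le_sqrt_mul_sqrt hf ((hg.condExp one_le_two).sub (memLp_const c))

end MeasureTheory

theorem statement13_general {Ω : Type*} {m0 : MeasurableSpace Ω}
    (P : Measure Ω) [IsProbabilityMeasure P]
    (ℱ : Filtration ℕ m0) (n : ℕ) (Z : ℕ → Ω → ℝ)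
    (hsq : ∀ t ∈ Finset.Icc 1 n, MemLp (Z t) 2 P) :
    ∫ ω, (∑ t ∈ Finset.Icc 1 n, ((P[Z t|ℱ (t - 1)]) ω - ∫ ω', Z t ω' ∂P)) ^ 2 ∂P
      ≤ ∑ t ∈ Finset.Icc 1 n, ∫ ω, (Z t ω) ^ 2 ∂P
        + 2 * ∑ t ∈ Finset.Icc 1 n, ∑ r ∈ Finset.Ico 1 t,
            Real.sqrt (∫ ω, (Z r ω) ^ 2 ∂P) *
              Real.sqrt (∫ ω, ((P[Z t|ℱ (r - 1)]) ω - ∫ ω', Z t ω' ∂P) ^ 2 ∂P) := by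
  set Y : ℕ → Ω → ℝ := fun t ω => (P[Z t|ℱ (t - 1)]) ω - ∫ ω', Z t ω' ∂P
  have hY : ∀ t ∈ Finset.Icc 1 n, MemLp (Y t) 2 P := fun t ht =>
    ((hsq t ht).condExp one_le_two).sub (memLp_const _)
  have hYsq : ∀ t ∈ Finset.Icc 1 n, ∫ ω, Y t ω ^ 2 ∂P ≤ ∫ ω, Z t ω ^ 2 ∂P := fun t ht =>
    integral_sq_condExp_sub_integral_le (ℱ.le _) (hsq t ht)
  rw [integral_sq_sum_Icc_eq hY]
  gcongr ?_ + 2 * ?_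
  · exact Finset.sum_le_sum hYsq
  gcongr with t ht r hr
  obtain ⟨hr1, hrt⟩ := Finset.mem_Ico.mp hr
  have hrn : r ∈ Finset.Icc 1 n := Finset.mem_Icc.mpr ⟨hr1, hrt.le.trans (Finset.mem_Icc.mp ht).2⟩
  calc ∫ ω, Y r ω * Y t ω ∂P
      ≤ √(∫ ω, Y r ω ^ 2 ∂P) * √(∫ ω, ((P[Z t|ℱ (r - 1)]) ω - ∫ ω', Z t ω' ∂P) ^ 2 ∂P) :=
        integral_mul_condExp_sub_const_le (ℱ.mono (by omega)) (ℱ.le _)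
          (stronglyMeasurable_condExp.sub stronglyMeasurable_const) (hY r hrn) (hsq t ht) _
    _ ≤ _ := mul_le_mul_of_nonneg_right (sqrt_le_sqrt (hYsq r hrn)) (sqrt_nonneg _)

/-- second-moment bound for the sum of the centered conditional
expectations `E[Z_t | F_{t−1}] − E[Z_t]`. -/
theorem statement13 {Ω : Type*} {m0 : MeasurableSpace Ω}
    (P : Measure Ω) [IsProbabilityMeasure P]
    (ℱ : Filtration ℕ m0) (n : ℕ) (Z : ℕ → Ω → ℝ)
    (hadapt : ∀ t ∈ Finset.Icc 1 n, StronglyMeasurable[ℱ t] (Z t))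
    (hsq : ∀ t ∈ Finset.Icc 1 n, MemLp (Z t) 2 P) :
    ∫ ω, (∑ t ∈ Finset.Icc 1 n, ((P[Z t|ℱ (t - 1)]) ω - ∫ ω', Z t ω' ∂P)) ^ 2 ∂P
      ≤ ∑ t ∈ Finset.Icc 1 n, ∫ ω, (Z t ω) ^ 2 ∂P
        + 2 * ∑ t ∈ Finset.Icc 1 n, ∑ r ∈ Finset.Ico 1 t,
            Real.sqrt (∫ ω, (Z r ω) ^ 2 ∂P) *
              Real.sqrt (∫ ω, ((P[Z t|ℱ (r - 1)]) ω - ∫ ω', Z t ω' ∂P) ^ 2 ∂P) :=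
  statement13_general P ℱ n Z hsq
end

section
/- Let k ≥ 1, q ∈ (0,1), μ, μ̃, μ*, μ̃* ∈ Δ_k(q), and let a_1,…,a_k, b_1,…,b_k ≥ 0 with a_{i₀} > 0 and b_{j₀} > 0 for some indices i₀, j₀ (so that all the sums below are positive). Then | log( (Σ_i μ*_i a_i)/(Σ_i μ_i b_i) ) − log( (Σ_i μ̃*_i a_i)/(Σ_i μ̃_i b_i) ) | ≤ (1/q) ( Σ_{i=1}^k |μ*_i − μ̃*_i| + Σ_{i=1}^k |μ_i − μ̃_i| ). -/
open MeasureTheory Filter Real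

noncomputable section

/-!
Split each logarithm of a ratio into a difference of logarithms and compare numerators and
denominators separately. A weighted sum `∑ νᵢ aᵢ` with all weights `≥ q` is at least `q ∑ aᵢ`,
and changing the weights moves it by at most `(∑ |νᵢ - ν'ᵢ|) ∑ aᵢ`. Since `log` is
`1/m`-Lipschitz on `[m, ∞)`, the total mass `∑ aᵢ` cancels and the bound `(1/q) ∑ |νᵢ - ν'ᵢ|`
remains.
-/

lemma Real.log_sub_log_le_abs_sub_div {x y m : ℝ} (hx : 0 < x) (hm : 0 < m) (hy : m ≤ y) :
    Real.log x - Real.log y ≤ |x - y| / m := by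
  have hy0 : 0 < y := hm.trans_le hy
  calc Real.log x - Real.log y = Real.log (x / y) := (Real.log_div hx.ne' hy0.ne').symm
    _ ≤ x / y - 1 := Real.log_le_sub_one_of_pos (div_pos hx hy0)
    _ = (x - y) / y := by field_simp
    _ ≤ |x - y| / y := by gcongr; exact le_abs_self _
    _ ≤ |x - y| / m := by gcongr

lemma Real.abs_log_sub_log_le_abs_sub_div {x y m : ℝ} (hm : 0 < m) (hx : m ≤ x) (hy : m ≤ y) :
    |Real.log x - Real.log y| ≤ |x - y| / m := by
  refine abs_sub_le_iff.2 ⟨Real.log_sub_log_le_abs_sub_div (hm.trans_le hx) hm hy, ?_⟩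
  rw [abs_sub_comm x y]
  exact Real.log_sub_log_le_abs_sub_div (hm.trans_le hy) hm hx

section WeightedSum

variable {ι : Type*} [Fintype ι] {q : ℝ} {ν ν' a : ι → ℝ}

lemma mul_sum_le_sum_mul_of_le (hν : ∀ i, q ≤ ν i) (ha : ∀ i, 0 ≤ a i) :
    q * ∑ i, a i ≤ ∑ i, ν i * a i := by
  rw [Finset.mul_sum]
  exact Finset.sum_le_sum fun i _ => mul_le_mul_of_nonneg_right (hν i) (ha i)

lemma sum_mul_pos_of_le (hq : 0 < q) (hν : ∀ i, q ≤ ν i) (ha : ∀ i, 0 ≤ a i)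
    (ha₀ : 0 < ∑ i, a i) : 0 < ∑ i, ν i * a i :=
  (mul_pos hq ha₀).trans_le (mul_sum_le_sum_mul_of_le hν ha)

lemma abs_sum_mul_sub_sum_mul_le (ha : ∀ i, 0 ≤ a i) :
    |∑ i, ν i * a i - ∑ i, ν' i * a i| ≤ (∑ i, |ν i - ν' i|) * ∑ i, a i := by
  rw [← Finset.sum_sub_distrib, Finset.sum_mul]
  refine (Finset.abs_sum_le_sum_abs _ _).trans (Finset.sum_le_sum fun i _ => ?_)
  rw [← sub_mul, abs_mul, abs_of_nonneg (ha i)]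
  gcongr
  exact Finset.single_le_sum (fun j _ => ha j) (Finset.mem_univ i)

lemma abs_log_sum_mul_sub_log_sum_mul_le (hq : 0 < q) (hν : ∀ i, q ≤ ν i)
    (hν' : ∀ i, q ≤ ν' i) (ha : ∀ i, 0 ≤ a i) (ha₀ : 0 < ∑ i, a i) :
    |Real.log (∑ i, ν i * a i) - Real.log (∑ i, ν' i * a i)| ≤ (1 / q) * ∑ i, |ν i - ν' i| :=
  calc |Real.log (∑ i, ν i * a i) - Real.log (∑ i, ν' i * a i)|
      ≤ |∑ i, ν i * a i - ∑ i, ν' i * a i| / (q * ∑ i, a i) :=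
        Real.abs_log_sub_log_le_abs_sub_div (mul_pos hq ha₀)
          (mul_sum_le_sum_mul_of_le hν ha) (mul_sum_le_sum_mul_of_le hν' ha)
    _ ≤ (∑ i, |ν i - ν' i|) * (∑ i, a i) / (q * ∑ i, a i) := by
        gcongr; exact abs_sum_mul_sub_sum_mul_le ha
    _ = (1 / q) * ∑ i, |ν i - ν' i| := by field_simp

end WeightedSum

theorem statement15_general (k : ℕ) (q : ℝ) (hq0 : 0 < q)
    (μ μt μs μts : Fin k → ℝ)
    (hμ : inSimplexGe q μ) (hμt : inSimplexGe q μt)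
    (hμs : inSimplexGe q μs) (hμts : inSimplexGe q μts)
    (a b : Fin k → ℝ) (ha : ∀ i, 0 ≤ a i) (hb : ∀ i, 0 ≤ b i)
    (i₀ j₀ : Fin k) (hai : 0 < a i₀) (hbj : 0 < b j₀) :
    |Real.log ((∑ i, μs i * a i) / (∑ i, μ i * b i))
        - Real.log ((∑ i, μts i * a i) / (∑ i, μt i * b i))|
      ≤ (1 / q) * ((∑ i, |μs i - μts i|) + ∑ i, |μ i - μt i|) := by
  have hA : 0 < ∑ i, a i := Finset.sum_pos' (fun i _ => ha i) ⟨i₀, Finset.mem_univ _, hai⟩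
  have hB : 0 < ∑ i, b i := Finset.sum_pos' (fun i _ => hb i) ⟨j₀, Finset.mem_univ _, hbj⟩
  rw [Real.log_div (sum_mul_pos_of_le hq0 hμs.2 ha hA).ne' (sum_mul_pos_of_le hq0 hμ.2 hb hB).ne',
    Real.log_div (sum_mul_pos_of_le hq0 hμts.2 ha hA).ne' (sum_mul_pos_of_le hq0 hμt.2 hb hB).ne',
    sub_sub_sub_comm, mul_add]
  exact (abs_sub _ _).trans (add_le_add
    (abs_log_sum_mul_sub_log_sum_mul_le hq0 hμs.2 hμts.2 ha hA)
    (abs_log_sum_mul_sub_log_sum_mul_le hq0 hμ.2 hμt.2 hb hB))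

/-- Lipschitz continuity of the log-ratio in the mixing weights. -/
theorem statement15 (k : ℕ) (hk : 1 ≤ k) (q : ℝ) (hq0 : 0 < q) (hq1 : q < 1)
    (μ μt μs μts : Fin k → ℝ)
    (hμ : inSimplexGe q μ) (hμt : inSimplexGe q μt)
    (hμs : inSimplexGe q μs) (hμts : inSimplexGe q μts)
    (a b : Fin k → ℝ) (ha : ∀ i, 0 ≤ a i) (hb : ∀ i, 0 ≤ b i)
    (i₀ j₀ : Fin k) (hai : 0 < a i₀) (hbj : 0 < b j₀) :
    |Real.log ((∑ i, μs i * a i) / (∑ i, μ i * b i))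
        - Real.log ((∑ i, μts i * a i) / (∑ i, μt i * b i))|
      ≤ (1 / q) * ((∑ i, |μs i - μts i|) + ∑ i, |μ i - μt i|) :=
  statement15_general k q hq0 μ μt μs μts hμ hμt hμs hμts a b ha hb i₀ j₀ hai hbj
end
end
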